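/- arXiv:1810.11692 — 3 statements merged into one kernel-verified Lean document; each statement's English description precedes it below -/
import Mathlib

section
/- Let d ≥ 1, n ≥ 1, m ≥ 1 be integers. Let a finite edge list be given by maps i, j : {1,…,m} → {1,…,n} with i_e ≠ j_e for every e. For each edge e let T̄_e ∈ ℝ^{(d+1)×(d+1)} (the measurement) and Ω_e ∈ ℝ^{(d+1)×(d+1)} (the weight). For each vertex v let T_v ∈ ℝ^{d×(d+1)}, and let T = [T₁ … T_n] ∈ ℝ^{d×(d+1)n} be the row-block concatenation. Define A ∈ ℝ^{(d+1)n × (d+1)m} blockwise by: the (r,e) block of size (d+1)×(d+1) equals −T̄_e if r = i_e, equals I_{d+1} if r = j_e, and equals the zero matrix otherwise; and let Ω_blk = blockdiag(Ω₁,…,Ω_m) ∈ ℝ^{(d+1)m × (d+1)m}. Then Σ_{e=1}^{m} tr( (T_{j_e} − T_{i_e} T̄_e) Ω_e (T_{j_e} − T_{i_e} T̄_e)ᵀ ) = tr( (A Ω_blk Aᵀ) Tᵀ T ). Equivalently, the sum of weighted squared residuals over all edges equals the trace of the connection Laplacian L = A Ω_blk Aᵀ against TᵀT. -/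
open Matrix BigOperators

theorem odometry_cost_as_connection_laplacian (d n m : ℕ) (hd : 1 ≤ d) (hn : 1 ≤ n)
    (hm : 1 ≤ m) (i j : Fin m → Fin n) (hij : ∀ e, i e ≠ j e)
    (Tbar : Fin m → Matrix (Fin (d + 1)) (Fin (d + 1)) ℝ)
    (Ω : Fin m → Matrix (Fin (d + 1)) (Fin (d + 1)) ℝ)
    (T : Fin n → Matrix (Fin d) (Fin (d + 1)) ℝ) :
    let Tcat : Matrix (Fin d) (Fin n × Fin (d + 1)) ℝ := fun r vq => T vq.1 r vq.2
    let A : Matrix (Fin n × Fin (d + 1)) (Fin m × Fin (d + 1)) ℝ := fun rp eq =>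
      if rp.1 = i eq.1 then (-(Tbar eq.1)) rp.2 eq.2
      else if rp.1 = j eq.1 then (1 : Matrix (Fin (d + 1)) (Fin (d + 1)) ℝ) rp.2 eq.2
      else 0
    let Ωblk : Matrix (Fin m × Fin (d + 1)) (Fin m × Fin (d + 1)) ℝ := fun ep eq =>
      if ep.1 = eq.1 then Ω ep.1 ep.2 eq.2 else 0
    ∑ e, ((T (j e) - T (i e) * Tbar e) * Ω e * (T (j e) - T (i e) * Tbar e)ᵀ).trace
      = ((A * Ωblk * Aᵀ) * (Tcatᵀ * Tcat)).trace := by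
  intro Tcat A Ωblk
  set Re : Fin m → Matrix (Fin d) (Fin (d + 1)) ℝ :=
    fun e => T (j e) - T (i e) * Tbar e with hRe
  set B : Matrix (Fin d) (Fin m × Fin (d + 1)) ℝ := fun r eq => Re eq.1 r eq.2 with hB
  have hTA : Tcat * A = B := by
    ext r ⟨e, q⟩
    simp only [Matrix.mul_apply, Fintype.sum_prod_type]
    have key : ∀ v : Fin n, ∑ p, Tcat r (v, p) * A (v, p) (e, q)
        = (if v = i e then -((T (i e) * Tbar e) r q) else 0)
          + (if v = j e then T (j e) r q else 0) := by
      intro v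
      by_cases h1 : v = i e
      · subst h1
        have h2 : i e ≠ j e := hij e
        simp [A, Tcat, h2, Matrix.mul_apply, mul_neg, Finset.sum_neg_distrib]
      · by_cases h2 : v = j e
        · subst h2
          simp [A, Tcat, h1, Matrix.one_apply, mul_ite]
        · simp [A, Tcat, h1, h2]
    rw [Finset.sum_congr rfl (fun v _ => key v), Finset.sum_add_distrib]
    simp only [Finset.sum_ite_eq', Finset.mem_univ, if_true]
    rw [hB]
    show _ = (T (j e) - T (i e) * Tbar e) r q
    rw [Matrix.sub_apply, Matrix.mul_apply]
    ring
  have hstep : ((A * Ωblk * Aᵀ) * (Tcatᵀ * Tcat)).trace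
      = ((Tcat * A) * Ωblk * (Tcat * A)ᵀ).trace := by
    have h : (Tcat * A) * Ωblk * (Tcat * A)ᵀ
        = Tcat * ((A * Ωblk * Aᵀ) * Tcatᵀ) := by
      simp [Matrix.transpose_mul, Matrix.mul_assoc]
    rw [h, Matrix.trace_mul_comm, Matrix.mul_assoc]
    conv_rhs => rw [← Matrix.mul_assoc, Matrix.trace_mul_cycle, Matrix.mul_assoc]
  rw [hstep, hTA]
  have hBΩ : B * Ωblk = fun r eq => (Re eq.1 * Ω eq.1) r eq.2 := by
    ext r ⟨e, q⟩
    simp only [Matrix.mul_apply, Fintype.sum_prod_type]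
    simp only [Ωblk, hB, mul_ite, mul_zero]
    rw [Finset.sum_comm]
    simp [Finset.sum_ite_eq', Matrix.mul_apply]
  rw [hBΩ]
  simp only [Matrix.trace, Matrix.diag, Matrix.mul_apply, Matrix.transpose_apply,
    Fintype.sum_prod_type]
  simp only [hB, HMul.hMul, dotProduct, Matrix.transpose_apply, Fintype.sum_prod_type]
  exact Finset.sum_comm
end

section
/- Let d ≥ 1, n ≥ 2, ℓ ≥ 1 be integers and set N = (d+1)·n + d·ℓ + d. Let T_v ∈ ℝ^{d×(d+1)} for v = 1,…,n and Θ_k ∈ ℝ^{d×d} for k = 1,…,ℓ be arbitrary, and let X = [T₁ … T_n, Θ₁ … Θ_ℓ, I_d] ∈ ℝ^{d×N} be their row-block concatenation (with last block the d×d identity). Fix vertices i ≠ j in {1,…,n}, an index e ∈ {1,…,ℓ}, a measurement T̄ ∈ ℝ^{(d+1)×(d+1)}, and a weight Ω ∈ ℝ^{(d+1)×(d+1)}. Define A_e ∈ ℝ^{(d+1)n×(d+1)} as the block column whose i-th (d+1)×(d+1) block is −T̄, whose j-th block is I_{d+1}, and whose other blocks are zero; let L_e = A_e Ω A_eᵀ;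 let U_e ∈ ℝ^{N×N} be the matrix whose top-left (d+1)n×(d+1)n block is L_e and which is zero elsewhere; let w_e ∈ ℝ^{d×N} be the block row whose block in the columns of Θ_e is I_d, whose block in the last d columns is I_d, and which is zero elsewhere; and let W_e = w_eᵀ w_e ∈ ℝ^{N×N}. Then, with M = T_j − T_i T̄, one has tr( (M + Θ_eᵀ M) Ω (M + Θ_eᵀ M)ᵀ ) = tr( U_e XᵀX W_e XᵀX ). -/
open Matrix BigOperators

/-- Index set for the block matrix `X = [T₁ … T_n, Θ₁ … Θ_ℓ, B]`:
`n` pose blocks of size `d+1`, `ℓ` selection blocks of size `d`, one final block of size `d`. -/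
abbrev PGIdx (d n l : ℕ) : Type := (Fin n × Fin (d + 1)) ⊕ ((Fin l × Fin d) ⊕ Fin d)

/-- The row-block concatenation `X = [T₁ … T_n, Θ₁ … Θ_ℓ, I_d]`. -/
def mkX {d n l : ℕ} (T : Fin n → Matrix (Fin d) (Fin (d + 1)) ℝ)
    (Θ : Fin l → Matrix (Fin d) (Fin d) ℝ) : Matrix (Fin d) (PGIdx d n l) ℝ :=
  fun r q =>
    match q with
    | Sum.inl vq => T vq.1 r vq.2
    | Sum.inr (Sum.inl kq) => Θ kq.1 r kq.2
    | Sum.inr (Sum.inr p) => if r = p then 1 else 0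

lemma trace_fromBlocks' {m p : Type*} [Fintype m] [Fintype p]
    (A : Matrix m m ℝ) (B : Matrix m p ℝ) (C : Matrix p m ℝ) (D : Matrix p p ℝ) :
    (Matrix.fromBlocks A B C D).trace = A.trace + D.trace := by
  simp [Matrix.trace, Matrix.diag, Fintype.sum_sum_type]

theorem loop_closure_term_as_quadratic_trace (d n l : ℕ) (hd : 1 ≤ d) (hn : 2 ≤ n)
    (hl : 1 ≤ l) (T : Fin n → Matrix (Fin d) (Fin (d + 1)) ℝ)
    (Θ : Fin l → Matrix (Fin d) (Fin d) ℝ)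
    (i j : Fin n) (hij : i ≠ j) (e : Fin l)
    (Tbar Ω : Matrix (Fin (d + 1)) (Fin (d + 1)) ℝ) :
    let X : Matrix (Fin d) (PGIdx d n l) ℝ := mkX T Θ
    let Ae : Matrix (Fin n × Fin (d + 1)) (Fin (d + 1)) ℝ := fun rp q =>
      if rp.1 = i then (-Tbar) rp.2 q
      else if rp.1 = j then (1 : Matrix (Fin (d + 1)) (Fin (d + 1)) ℝ) rp.2 q
      else 0
    let Le : Matrix (Fin n × Fin (d + 1)) (Fin n × Fin (d + 1)) ℝ := Ae * Ω * Aeᵀ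
    let Ue : Matrix (PGIdx d n l) (PGIdx d n l) ℝ := fun a b =>
      match a, b with
      | Sum.inl p, Sum.inl q => Le p q
      | _, _ => 0
    let we : Matrix (Fin d) (PGIdx d n l) ℝ := fun r q =>
      match q with
      | Sum.inl _ => 0
      | Sum.inr (Sum.inl kq) => if kq.1 = e ∧ r = kq.2 then 1 else 0
      | Sum.inr (Sum.inr p) => if r = p then 1 else 0
    let We : Matrix (PGIdx d n l) (PGIdx d n l) ℝ := weᵀ * we
    let M : Matrix (Fin d) (Fin (d + 1)) ℝ := T j - T i * Tbar
    (((M + (Θ e)ᵀ * M) * Ω * (M + (Θ e)ᵀ * M)ᵀ).trace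
      = (Ue * (Xᵀ * X) * We * (Xᵀ * X)).trace) := by
  intro X Ae Le Ue we We M
  -- block pieces
  set Y : Matrix (Fin d) (Fin n × Fin (d + 1)) ℝ := fun r vq => T vq.1 r vq.2 with hY
  set C : Matrix (Fin d) ((Fin l × Fin d) ⊕ Fin d) ℝ := fun r q =>
    match q with
    | Sum.inl kq => Θ kq.1 r kq.2
    | Sum.inr p => if r = p then 1 else 0 with hC
  set w2 : Matrix (Fin d) ((Fin l × Fin d) ⊕ Fin d) ℝ := fun r q =>
    match q with
    | Sum.inl kq => if kq.1 = e ∧ r = kq.2 then 1 else 0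
    | Sum.inr p => if r = p then 1 else 0 with hw2
  have hX : X = Matrix.fromCols Y C := by
    ext r q; rcases q with q | (q | q) <;> rfl
  have hwe : we = Matrix.fromCols 0 w2 := by
    ext r q; rcases q with q | (q | q) <;> rfl
  have hUe : Ue = Matrix.fromBlocks Le 0 0 0 := by
    ext a b; rcases a with a | a <;> rcases b with b | b <;> rfl
  -- key small products
  have hYA : Y * Ae = M := by
    ext r q
    rw [Matrix.mul_apply, Fintype.sum_prod_type]
    have hinner : ∀ v : Fin n, (∑ a : Fin (d + 1), Y r (v, a) * Ae (v, a) q)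
        = (if v = i then (-(T i * Tbar)) r q else 0)
          + (if v = j then (T j) r q else 0) := by
      intro v
      by_cases hvi : v = i
      · subst hvi
        simp [Ae, hij, Matrix.mul_apply, Y, Finset.mul_sum, neg_mul, Finset.sum_neg_distrib]
      · by_cases hvj : v = j
        · subst hvj
          simp [Ae, hvi, Matrix.one_apply, Y]
        · simp [Ae, hvi, hvj]
    rw [Finset.sum_congr rfl fun v _ => hinner v]
    rw [Finset.sum_add_distrib]
    simp only [Finset.sum_ite_eq', Finset.mem_univ, if_true]
    simp [M, Matrix.sub_apply]
    ring
  have hCw : C * w2ᵀ = Θ e + 1 := by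
    ext r s
    rw [Matrix.mul_apply, Fintype.sum_sum_type]
    have h1 : (∑ kq : Fin l × Fin d, C r (Sum.inl kq) * w2ᵀ (Sum.inl kq) s)
        = Θ e r s := by
      rw [Fintype.sum_prod_type]
      simp [C, w2, Matrix.transpose, Matrix.of_apply, ite_and, Finset.sum_ite_eq', Finset.sum_ite_eq]
    have h2 : (∑ p : Fin d, C r (Sum.inr p) * w2ᵀ (Sum.inr p) s)
        = (1 : Matrix (Fin d) (Fin d) ℝ) r s := by
      simp [C, w2, Matrix.transpose, Matrix.of_apply, Matrix.one_apply, eq_comm]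
    rw [h1, h2, Matrix.add_apply]
  -- assemble the right-hand side
  have hZ : Xᵀ * X = Matrix.fromBlocks (Yᵀ * Y) (Yᵀ * C) (Cᵀ * Y) (Cᵀ * C) := by
    rw [hX, Matrix.transpose_fromCols, Matrix.fromRows_mul_fromCols]
  have hWe : We = Matrix.fromBlocks 0 0 0 (w2ᵀ * w2) := by
    show weᵀ * we = _
    rw [hwe, Matrix.transpose_fromCols, Matrix.fromRows_mul_fromCols]
    simp
  rw [hZ, hWe, hUe, Matrix.fromBlocks_multiply, Matrix.fromBlocks_multiply,
    Matrix.fromBlocks_multiply]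
  simp only [Matrix.zero_mul, Matrix.mul_zero, add_zero, zero_add]
  rw [trace_fromBlocks']
  have hrhs : (Le * (Yᵀ * C) * (w2ᵀ * w2) * (Cᵀ * Y)).trace
      = ((M + (Θ e)ᵀ * M) * Ω * (M + (Θ e)ᵀ * M)ᵀ).trace := by
    have hassoc : Le * (Yᵀ * C) * (w2ᵀ * w2) * (Cᵀ * Y)
        = (Le * Yᵀ * (C * w2ᵀ)) * ((C * w2ᵀ)ᵀ * Y) := by
      rw [Matrix.transpose_mul, Matrix.transpose_transpose]
      simp only [Matrix.mul_assoc]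
    rw [hassoc, Matrix.trace_mul_comm]
    have h1 : (C * w2ᵀ)ᵀ * Y * (Le * Yᵀ * (C * w2ᵀ))
        = ((C * w2ᵀ)ᵀ * (Y * Ae)) * Ω * ((C * w2ᵀ)ᵀ * (Y * Ae))ᵀ := by
      show _ = _ * _ * _
      simp only [Matrix.transpose_mul, Matrix.transpose_transpose, Le]
      simp only [Matrix.mul_assoc]
    rw [h1, hYA, hCw]
    have h2 : (Θ e + 1)ᵀ * M = M + (Θ e)ᵀ * M := by
      rw [Matrix.transpose_add, Matrix.transpose_one, Matrix.add_mul, Matrix.one_mul]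
      exact add_comm _ _
    rw [h2]
  rw [hrhs]
  simp
end

section
/- (Exactness of the SDP relaxation at rank-d solutions.) Let d ≥ 1, n ≥ 1, ℓ ≥ 1 be integers and N = (d+1)·n + d·ℓ + d. Let Z ∈ ℝ^{N×N} be a symmetric positive semidefinite matrix of rank at most d that belongs to the SDP feasible set. Then there exist rotations/reflections R₁,…,R_n ∈ ℝ^{d×d} with R_iᵀR_i = I_d (i.e., R_i ∈ O(d)), translations t₁,…,t_n ∈ ℝ^d, and signs θ₁,…,θ_ℓ ∈ {-1,+1} such that Z = XᵀX, where X = [T₁ … T_n, Θ₁ … Θ_ℓ, I_d] ∈ ℝ^{d×N}, T_i = [R_i t_i], and Θ_k = θ_k·I_d. In particular, any rank-d feasible point of the SDP relaxation is realized exactly by a feasible point of the (orthogonally relaxed) discrete-continuous problem. -/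
open Matrix BigOperators

/-- The pose `T = [R  t]` obtained by appending the translation column `t` to `R`. -/
def mkT {d : ℕ} (R : Matrix (Fin d) (Fin d) ℝ) (t : Fin d → ℝ) :
    Matrix (Fin d) (Fin (d + 1)) ℝ :=
  fun r q => if h : (q : ℕ) < d then R r ⟨q, h⟩ else t r

/-- Index of the `p`-th row/column of the `a`-th small (size-`d`) block: the blocks
`Θ₁, …, Θ_ℓ` (for `a = Sum.inl k`) and the final block (for `a = Sum.inr ()`). -/
def dIdx {d n l : ℕ} (a : Fin l ⊕ Unit) (p : Fin d) : PGIdx d n l :=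
  match a with
  | Sum.inl k => Sum.inr (Sum.inl (k, p))
  | Sum.inr _ => Sum.inr (Sum.inr p)

/-- The feasible set of the SDP relaxation: symmetric positive-semidefinite matrices whose
pose blocks have identity top-left `d×d` part, whose small diagonal blocks equal `I_d`,
and whose small off-diagonal blocks are scalar multiples of `I_d`. -/
def sdpFeasible (d n l : ℕ) : Set (Matrix (PGIdx d n l) (PGIdx d n l) ℝ) :=
  {Z | Z.PosSemidef ∧
    (∀ a : Fin n, ∀ p q : Fin d,
      Z (Sum.inl (a, p.castSucc)) (Sum.inl (a, q.castSucc)) = if p = q then 1 else 0) ∧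
    (∀ a : Fin l ⊕ Unit, ∀ p q : Fin d, Z (dIdx a p) (dIdx a q) = if p = q then 1 else 0) ∧
    (∀ a b : Fin l ⊕ Unit, ∃ s : ℝ,
      ∀ p q : Fin d, Z (dIdx a p) (dIdx b q) = s * (if p = q then 1 else 0))}

lemma gram_factor {ι : Type*} [Fintype ι] [DecidableEq ι] {d : ℕ}
    (Z : Matrix ι ι ℝ) (hZ : Z.PosSemidef) (hrank : Z.rank ≤ d)
    (e : Fin d → ι)
    (he : ∀ p q : Fin d, Z (e p) (e q) = if p = q then 1 else 0) :
    ∀ j j' : ι, Z j j' = ∑ p : Fin d, Z (e p) j * Z (e p) j' := by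
  obtain ⟨B, hB⟩ : ∃ B : Matrix ι ι ℝ, Z = Bᴴ * B := by
    open scoped MatrixOrder in
    obtain ⟨X, hX, -, hXZ⟩ := CFC.exists_sqrt_of_isSelfAdjoint_of_quasispectrumRestricts
      hZ.isHermitian (QuasispectrumRestricts.nnreal_of_nonneg hZ.nonneg)
    exact ⟨X, by rw [← hXZ, ← Matrix.star_eq_conjTranspose, hX.star_eq]⟩
  rw [Matrix.conjTranspose_eq_transpose_of_trivial] at hB
  set c : ι → (ι → ℝ) := fun j => Bᵀ j with hc
  have hZdot : ∀ j j' : ι, Z j j' = ∑ i, c j i * c j' i := by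
    intro j j'
    rw [hB, Matrix.mul_apply]
    rfl
  set b : Fin d → (ι → ℝ) := fun p => c (e p) with hbdef
  have hbb : ∀ p q : Fin d, ∑ i, b p i * b q i = if p = q then 1 else 0 := by
    intro p q; rw [← hZdot, he]
  have hdot : ∀ (a : Fin d → ℝ) (v : ι → ℝ),
      ∑ i, (∑ p, a p • b p) i * v i = ∑ p, a p * ∑ i, b p i * v i := by
    intro a v
    simp only [Finset.sum_apply, Pi.smul_apply, smul_eq_mul, Finset.sum_mul]
    rw [Finset.sum_comm]
    refine Finset.sum_congr rfl fun p _ => ?_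
    rw [Finset.mul_sum]
    refine Finset.sum_congr rfl fun i _ => ?_
    ring
  have hb_li : LinearIndependent ℝ b := by
    rw [Fintype.linearIndependent_iff]
    intro g hg q
    have h0 : ∑ i, (∑ p, g p • b p) i * b q i = 0 := by
      rw [hg]; simp
    rw [hdot] at h0
    simp only [hbb, mul_ite, mul_one, mul_zero] at h0
    simpa [Finset.sum_ite_eq'] using h0
  have hW : Submodule.span ℝ (Set.range b) = Submodule.span ℝ (Set.range c) := by
    refine Submodule.eq_of_le_of_finrank_le ?_ ?_
    · refine Submodule.span_le.mpr ?_
      rintro _ ⟨p, rfl⟩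
      exact Submodule.subset_span ⟨e p, rfl⟩
    · have h1 : Module.finrank ℝ (Submodule.span ℝ (Set.range c)) ≤ d := by
        have : Z.rank = Module.finrank ℝ (Submodule.span ℝ (Set.range c)) := by
          rw [hB, Matrix.rank_transpose_mul_self, Matrix.rank_eq_finrank_span_cols]; rfl
        omega
      have h2 : Module.finrank ℝ (Submodule.span ℝ (Set.range b)) = d := by
        rw [finrank_span_eq_card hb_li, Fintype.card_fin]
      omega
  intro j j'
  have hcj : c j ∈ Submodule.span ℝ (Set.range b) := by
    rw [hW]; exact Submodule.subset_span ⟨j, rfl⟩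
  obtain ⟨a, ha⟩ := Submodule.mem_span_range_iff_exists_fun ℝ |>.mp hcj
  have hcoef : ∀ q : Fin d, a q = Z (e q) j := by
    intro q
    have := congrArg (fun v : ι → ℝ => ∑ i, v i * b q i) ha
    rw [hdot] at this
    simp only [hbb, mul_ite, mul_one, mul_zero, Finset.sum_ite_eq'] at this
    simp only [Finset.mem_univ, if_true] at this
    rw [this, hZdot (e q) j]
    exact Finset.sum_congr rfl fun i _ => mul_comm _ _
  have key : Z j j' = ∑ p, a p * Z (e p) j' := by
    rw [hZdot j j', ← ha, hdot]
    refine Finset.sum_congr rfl fun p _ => ?_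
    rw [← hZdot (e p) j']
  rw [key]
  refine Finset.sum_congr rfl fun p _ => by rw [hcoef]

/-- Exactness of the SDP relaxation at rank-`d` solutions: any feasible `Z` of rank at most
`d` factors as `Z = XᵀX` for a feasible point `X` of the orthogonally relaxed
discrete-continuous problem (with `R_i ∈ O(d)` and `θ_k ∈ {-1, +1}`). -/
theorem sdp_rank_d_exactness (d n l : ℕ) (hd : 1 ≤ d) (hn : 1 ≤ n) (hl : 1 ≤ l)
    (Z : Matrix (PGIdx d n l) (PGIdx d n l) ℝ)
    (hZ : Z ∈ sdpFeasible d n l) (hrank : Z.rank ≤ d) :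
    ∃ (R : Fin n → Matrix (Fin d) (Fin d) ℝ) (t : Fin n → Fin d → ℝ) (θ : Fin l → ℝ),
      (∀ v, (R v)ᵀ * R v = 1) ∧ (∀ k, θ k = -1 ∨ θ k = 1) ∧
      Z = (mkX (fun v => mkT (R v) (t v)) (fun k => θ k • (1 : Matrix (Fin d) (Fin d) ℝ)))ᵀ
            * mkX (fun v => mkT (R v) (t v)) (fun k => θ k • (1 : Matrix (Fin d) (Fin d) ℝ)) := by
  obtain ⟨hpsd, hpose, hdiag, hoff⟩ := hZ
  set E : Fin d → PGIdx d n l := fun p => Sum.inr (Sum.inr p) with hE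
  have he : ∀ p q : Fin d, Z (E p) (E q) = if p = q then 1 else 0 :=
    fun p q => hdiag (Sum.inr ()) p q
  have key := gram_factor Z hpsd hrank E he
  choose θ hθ using fun k => hoff (Sum.inr ()) (Sum.inl k)
  set R : Fin n → Matrix (Fin d) (Fin d) ℝ :=
    fun v => Matrix.of fun r q => Z (E r) (Sum.inl (v, q.castSucc)) with hR
  set t : Fin n → Fin d → ℝ := fun v r => Z (E r) (Sum.inl (v, Fin.last d)) with ht
  refine ⟨R, t, θ, ?_, ?_, ?_⟩
  · -- orthogonality
    intro v
    ext p q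
    rw [Matrix.mul_apply, Matrix.one_apply, ← hpose v p q, key]
    exact Finset.sum_congr rfl fun r _ => rfl
  · -- signs
    intro k
    have q0 : Fin d := ⟨0, hd⟩
    have h1 : Z (dIdx (Sum.inl k) q0) (dIdx (Sum.inl k) q0) = 1 := by
      rw [hdiag (Sum.inl k) q0 q0, if_pos rfl]
    rw [key] at h1
    have hterm : ∀ p : Fin d, Z (E p) (dIdx (Sum.inl k) q0) * Z (E p) (dIdx (Sum.inl k) q0)
        = if p = q0 then θ k * θ k else 0 := by
      intro p
      have h2 : Z (E p) (dIdx (Sum.inl k) q0) = θ k * if p = q0 then 1 else 0 := hθ k p q0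
      rw [h2]
      split <;> ring
    rw [Finset.sum_congr rfl fun p _ => hterm p] at h1
    simp only [Finset.sum_ite_eq', Finset.mem_univ, if_true] at h1
    exact (mul_self_eq_one_iff.mp h1).symm
  · -- factorization
    have hX : ∀ (r : Fin d) (j : PGIdx d n l),
        mkX (fun v => mkT (R v) (t v)) (fun k => θ k • (1 : Matrix (Fin d) (Fin d) ℝ)) r j
          = Z (E r) j := by
      intro r j
      match j with
      | Sum.inl (v, q) =>
        show mkT (R v) (t v) r q = _
        rw [mkT]
        by_cases h : (q : ℕ) < d
        · rw [dif_pos h]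
          have : (⟨(q : ℕ), h⟩ : Fin d).castSucc = q := by
            apply Fin.ext; rfl
          show Z (E r) (Sum.inl (v, (⟨(q : ℕ), h⟩ : Fin d).castSucc)) = _
          rw [this]
        · rw [dif_neg h]
          have : q = Fin.last d := by
            apply Fin.ext
            have := q.isLt
            simp only [Fin.val_last]
            omega
          rw [ht, this]
      | Sum.inr (Sum.inl (k, q)) =>
        show (θ k • (1 : Matrix (Fin d) (Fin d) ℝ)) r q = _
        rw [Matrix.smul_apply, Matrix.one_apply, smul_eq_mul]
        exact (hθ k r q).symm
      | Sum.inr (Sum.inr p) =>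
        show (if r = p then (1:ℝ) else 0) = _
        rw [he r p]
    ext j j'
    rw [Matrix.mul_apply, key]
    refine Finset.sum_congr rfl fun r _ => ?_
    rw [Matrix.transpose_apply, hX r j, hX r j']
end
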